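/- (Expansion lemma, equation (2.5)) Let a, b be odd positive integers, h ∈ ℤ, r ≥ 1, n ≥ 0, x real, and define S_{n,i,q}^{(h,r)}(a) = \sum_{j_1,...,j_r=0}^{a-1} (-1)^{j_1+...+j_r} q^{\sum_{l=1}^r (h+n-l-i+1) j_l} [j_1+...+j_r]_q^i. Then \sum_{j_1,...,j_r=0}^{a-1} (-1)^{j_1+...+j_r} q^{b\sum_{l=1}^r (h-l+1) j_l} E_{n,q^a}^{(h,r)}\left(bx + \frac{b(j_1+...+j_r)}{a}\right) = \sum_{i=0}^{n} \binom{n}{i} \left(\frac{[b]_q}{[a]_q}\right)^i E_{n-i,q^a}^{(h,r)}(bx) \, S_{n,i,q^b}^{(h,r)}(a). -/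

import Mathlib

noncomputable def qnum (q x : ℝ) : ℝ := (1 - q ^ x) / (1 - q)

/-- The q-number of a natural number: `[a]_q = (1-q^a)/(1-q)`. -/
noncomputable def qnat (q : ℝ) (a : ℕ) : ℝ := (1 - q ^ a) / (1 - q)

/-- The (h,q)-extension of higher-order Euler polynomials, by the finite closed formula. -/
noncomputable def qE (q : ℝ) (h : ℤ) (r n : ℕ) (x : ℝ) : ℝ :=
  (1 + q) ^ r / (1 - q) ^ n *
    ∑ l ∈ Finset.range (n + 1), (n.choose l : ℝ) * (-(q ^ x)) ^ l /
      ∏ j ∈ Finset.range r, (1 + q ^ (h - r + l + 1 + j))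

/-- `S_{n,i,q}^{(h,r)}(a) = ∑_{j_1,…,j_r=0}^{a-1} (-1)^{j_1+⋯+j_r}
q^{∑_{l=1}^r (h+n-l-i+1) j_l} [j_1+⋯+j_r]_q^i`. -/
noncomputable def qS (q : ℝ) (h : ℤ) (r n i a : ℕ) : ℝ :=
  ∑ j : Fin r → Fin a,
    (-1 : ℝ) ^ (∑ l, (j l : ℕ)) *
      q ^ (∑ l : Fin r, (h + n - (l : ℕ) - i) * (j l : ℤ)) *
      (qnat q (∑ l, (j l : ℕ))) ^ i

/-!
Writing `Q = q^a`, the shift `b J / a` multiplies `Q^x` by `u = (q^b)^J`, and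
`[b J / a]_Q = ([b]_q / [a]_q) [J]_{q^b}`. Since `qE` is a binomial sum in `-Q^x`, the
addition theorem `qE_Q (x + t) = ∑ᵢ C(n,i) [t]_Q^i Q^{t(n-i)} qE_{Q,n-i}(x)` follows from the
re-expansion `(1 + u X)^n = ((1 - u) + u (1 + X))^n`. Summing over `j` and collecting the
powers of `q^b` into the exponent of `S` gives the theorem.
-/

open Finset

theorem Nat.choose_mul_choose_sub_comm (n i m : ℕ) :
    n.choose i * (n - i).choose m = n.choose m * (n - m).choose i := by
  have hi := Nat.choose_mul (n := n) (k := i + m) (s := i) (by omega)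
  have hm := Nat.choose_mul (n := n) (k := i + m) (s := m) (by omega)
  simp only [Nat.add_sub_cancel_left, Nat.add_sub_cancel] at hi hm
  rw [← hi, ← hm, Nat.choose_symm_add]

section Reexpansion

variable {R : Type*} [CommRing R]

theorem choose_mul_pow_eq_sum_choose_mul_choose (n m : ℕ) (u : R) :
    n.choose m * u ^ m =
      ∑ i ∈ range (n + 1), n.choose i * (n - i).choose m * (1 - u) ^ i * u ^ (n - i) := by
  simp_rw [← Nat.cast_mul, Nat.choose_mul_choose_sub_comm, Nat.cast_mul, mul_assoc, ← mul_sum]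
  rcases lt_or_ge n m with hnm | hmn
  · simp [Nat.choose_eq_zero_of_lt hnm]
  congr 1
  have hrestrict : ∑ i ∈ range (n + 1), ((n - m).choose i * ((1 - u) ^ i * u ^ (n - i)) : R) =
      ∑ i ∈ range (n - m + 1), ((n - m).choose i * ((1 - u) ^ i * u ^ (n - i)) : R) := by
    refine (sum_subset (range_subset_range.2 (by omega)) fun i _ hi => ?_).symm
    rw [mem_range, not_lt] at hi
    simp [Nat.choose_eq_zero_of_lt (show n - m < i by omega)]
  have hsplit : ∀ i ∈ range (n - m + 1),
      ((n - m).choose i * ((1 - u) ^ i * u ^ (n - i)) : R) =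
        u ^ m * ((1 - u) ^ i * u ^ (n - m - i) * (n - m).choose i) := by
    intro i hi
    rw [mem_range] at hi
    rw [show n - i = m + (n - m - i) by omega, pow_add]
    ring
  rw [hrestrict, sum_congr rfl hsplit, ← mul_sum, ← add_pow, sub_add_cancel, one_pow, mul_one]

theorem sum_choose_mul_pow_mul_eq_sum (n : ℕ) (u : R) (f : ℕ → R) :
    ∑ m ∈ range (n + 1), n.choose m * u ^ m * f m =
      ∑ i ∈ range (n + 1), n.choose i * (1 - u) ^ i * u ^ (n - i) *
        ∑ m ∈ range (n - i + 1), (n - i).choose m * f m := by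
  have hrestrict : ∀ i ∈ range (n + 1), ∑ m ∈ range (n - i + 1), ((n - i).choose m * f m : R) =
      ∑ m ∈ range (n + 1), ((n - i).choose m * f m : R) := by
    refine fun i _ => sum_subset (range_subset_range.2 (by omega)) fun m _ hm => ?_
    rw [mem_range, not_lt] at hm
    simp [Nat.choose_eq_zero_of_lt (show n - i < m by omega)]
  simp_rw [choose_mul_pow_eq_sum_choose_mul_choose n _ u, sum_mul]
  rw [sum_congr rfl fun i hi => congrArg _ (hrestrict i hi), sum_comm]
  simp_rw [mul_sum]
  exact sum_congr rfl fun _ _ => sum_congr rfl fun _ _ => by ring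

end Reexpansion

theorem one_sub_pow_eq_mul_qnat (p : ℝ) (J : ℕ) : 1 - p ^ J = (1 - p) * qnat p J := by
  rw [qnat, mul_comm, div_mul_cancel_of_imp]
  intro hp
  rw [← sub_eq_zero.1 hp, one_pow, sub_self]

theorem qE_add {Q : ℝ} (hQ0 : 0 < Q) (hQ1 : Q ≠ 1) (h : ℤ) (r n : ℕ) (x t : ℝ) :
    qE Q h r n (x + t) =
      ∑ i ∈ range (n + 1), n.choose i * qnum Q t ^ i * (Q ^ t) ^ (n - i) * qE Q h r (n - i) x := by
  have h1Q : 1 - Q ≠ 0 := sub_ne_zero.2 hQ1.symm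
  have hfactor : ∀ l : ℕ, (-Q ^ (x + t)) ^ l = (Q ^ t) ^ l * (-Q ^ x) ^ l := by
    intro l
    rw [Real.rpow_add hQ0, ← mul_pow]
    ring
  simp_rw [qE, hfactor, mul_div_assoc, ← mul_assoc]
  rw [sum_choose_mul_pow_mul_eq_sum, mul_sum]
  refine sum_congr rfl fun i hi => ?_
  rw [mem_range] at hi
  have hpow : (1 - Q) ^ n = (1 - Q) ^ i * (1 - Q) ^ (n - i) := by
    rw [← pow_add, Nat.add_sub_cancel' (by omega)]
  have hqnum : 1 - Q ^ t = (1 - Q) * qnum Q t := (mul_div_cancel₀ _ h1Q).symm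
  rw [hqnum, hpow, mul_pow]
  field_simp

section Specialization

variable {q : ℝ} {a : ℕ}

theorem pow_rpow_mul_div (hq : 0 < q) (ha : a ≠ 0) (b J : ℕ) :
    (q ^ a) ^ ((b : ℝ) * J / a) = (q ^ b) ^ J := by
  rw [← Real.rpow_natCast q a, ← Real.rpow_mul hq.le, mul_div_cancel₀ _ (by exact_mod_cast ha),
    ← pow_mul, ← Nat.cast_mul, Real.rpow_natCast]

theorem qnum_pow_mul_div (hq0 : 0 < q) (hq1 : q ≠ 1) (ha : a ≠ 0) (b J : ℕ) :
    qnum (q ^ a) ((b : ℝ) * J / a) = qnat q b / qnat q a * qnat (q ^ b) J := by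
  have h1q : 1 - q ≠ 0 := sub_ne_zero.2 hq1.symm
  have hratio : qnat q b / qnat q a = (1 - q ^ b) / (1 - q ^ a) :=
    div_div_div_cancel_right₀ h1q _ _
  rw [qnum, pow_rpow_mul_div hq0 ha, one_sub_pow_eq_mul_qnat, hratio]
  ring

end Specialization

theorem zpow_sum_mul_eq {p : ℝ} (hp : p ≠ 0) {r : ℕ} (c : Fin r → ℤ) (j : Fin r → ℕ) (k : ℕ) :
    p ^ (∑ l, (c l + k) * (j l : ℤ)) = p ^ (∑ l, c l * (j l : ℤ)) * (p ^ ∑ l, j l) ^ k := by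
  have hsum : ∑ l, (c l + k) * (j l : ℤ) = ∑ l, c l * (j l : ℤ) + ((k * ∑ l, j l : ℕ) : ℤ) := by
    push_cast
    rw [mul_sum, ← sum_add_distrib]
    exact sum_congr rfl fun _ _ => by ring
  rw [hsum, zpow_add₀ hp, zpow_natCast, mul_comm k, pow_mul]

theorem qE_expansion_general (q : ℝ) (hq0 : 0 < q) (hq1 : q < 1) (r : ℕ)
    (h : ℤ) (n : ℕ) (x : ℝ)
    (a b : ℕ) (ha : 0 < a) :
    ∑ j : Fin r → Fin a,
        (-1 : ℝ) ^ (∑ l, (j l : ℕ)) *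
          q ^ ((b : ℤ) * ∑ l : Fin r, (h - (l : ℕ)) * (j l : ℤ)) *
          qE (q ^ a) h r n ((b : ℝ) * x + (b : ℝ) * (∑ l, (j l : ℕ) : ℕ) / a) =
      ∑ i ∈ Finset.range (n + 1),
        (n.choose i : ℝ) * (qnat q b / qnat q a) ^ i * qE (q ^ a) h r (n - i) ((b : ℝ) * x) *
          qS (q ^ b) h r n i a := by
  have hqa1 : q ^ a ≠ 1 := (pow_lt_one₀ hq0.le hq1 ha.ne').ne
  simp only [zpow_mul, zpow_natCast]
  simp only [qS, mul_sum]
  rw [sum_comm]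
  refine sum_congr rfl fun j _ => ?_
  rw [qE_add (pow_pos hq0 a) hqa1, qnum_pow_mul_div hq0 hq1.ne ha.ne', pow_rpow_mul_div hq0 ha.ne',
    mul_sum]
  refine sum_congr rfl fun i hi => ?_
  have hexp : ∑ l : Fin r, (h + n - (l : ℕ) - i) * (j l : ℤ) =
      ∑ l : Fin r, ((h - (l : ℕ)) + (n - i : ℕ)) * ((j l : ℕ) : ℤ) := by
    rw [Nat.cast_sub (Nat.le_of_lt_succ (mem_range.1 hi))]
    exact sum_congr rfl fun _ _ => by ring
  rw [hexp, zpow_sum_mul_eq (pow_ne_zero b hq0.ne')]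
  ring

theorem qE_expansion (q : ℝ) (hq0 : 0 < q) (hq1 : q < 1) (r : ℕ) (hr : 0 < r)
    (h : ℤ) (n : ℕ) (x : ℝ)
    (a b : ℕ) (ha : 0 < a) (hb : 0 < b) (haodd : Odd a) (hbodd : Odd b) :
    ∑ j : Fin r → Fin a,
        (-1 : ℝ) ^ (∑ l, (j l : ℕ)) *
          q ^ ((b : ℤ) * ∑ l : Fin r, (h - (l : ℕ)) * (j l : ℤ)) *
          qE (q ^ a) h r n ((b : ℝ) * x + (b : ℝ) * (∑ l, (j l : ℕ) : ℕ) / a) =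
      ∑ i ∈ Finset.range (n + 1),
        (n.choose i : ℝ) * (qnat q b / qnat q a) ^ i * qE (q ^ a) h r (n - i) ((b : ℝ) * x) *
          qS (q ^ b) h r n i a :=
  qE_expansion_general q hq0 hq1 r h n x a b ha
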